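/- arXiv:0903.5442 — 7 statements merged into one kernel-verified Lean document; each statement's English description precedes it below -/
import Mathlib

section
/- Let m ≥ 3 be a natural number. For each natural number d ≥ 1 define χ_d = (m / ((d+1)·((m-1)·d + m))) · C((m-1)²·d + (m-1)·m, d), where C denotes the binomial coefficient (this is the Euler characteristic of the Kronecker moduli space M^m_{d,d+1}). Then the sequence (ln χ_d)/d converges as d → ∞, and its limit equals (m-1)²·ln((m-1)²) − (m²−2m)·ln(m²−2m). -/
open Filter Real Topology Finset

/-- The Euler characteristic of the Kronecker moduli space `M^m_{d,d+1}`,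
as a real number:
`χ_d = (m / ((d+1)·((m-1)·d + m))) · C((m-1)²·d + (m-1)·m, d)`. -/
noncomputable def kroneckerEuler (m d : ℕ) : ℝ :=
  ((m : ℝ) / ((d + 1) * (((m : ℝ) - 1) * d + m))) *
    (Nat.choose ((m - 1) ^ 2 * d + (m - 1) * m) d : ℝ)

/-!
Write `a = (m-1)² = b + 1` and `c = (m-1)m`. Passing from `d` to `d + 1`, the rational prefactor of
`χ_d` changes by a factor tending to `1`, while
`C(a(d+1)+c, d+1) / C(ad+c, d) = (ad+c+1)⋯(ad+c+a) / ((d+1)·(bd+c+1)⋯(bd+c+b))`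
is a quotient of two products of `a` affine functions of `d`, hence tends to `a^a / b^b`.
So `ln χ_{d+1} - ln χ_d → a ln a - b ln b`, and by Cesàro the averages `(ln χ_d)/d` have the
same limit.
-/

theorem tendsto_affine_div_natCast (α β : ℝ) :
    Tendsto (fun n : ℕ => (α * n + β) / n) atTop (𝓝 α) := by
  have h : Tendsto (fun n : ℕ => α + β / n) atTop (𝓝 (α + 0)) :=
    tendsto_const_nhds.add (tendsto_const_div_atTop_nhds_zero_nat β)
  rw [add_zero] at h
  refine h.congr' ?_
  filter_upwards [eventually_ne_atTop 0] with n hn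
  field_simp

theorem tendsto_affine_div_affine (α β γ δ : ℝ) (hγ : γ ≠ 0) :
    Tendsto (fun n : ℕ => (α * n + β) / (γ * n + δ)) atTop (𝓝 (α / γ)) := by
  refine ((tendsto_affine_div_natCast α β).div (tendsto_affine_div_natCast γ δ) hγ).congr' ?_
  filter_upwards [eventually_ne_atTop 0] with n hn
  exact div_div_div_cancel_right₀ (Nat.cast_ne_zero.mpr hn) _ _

theorem tendsto_div_natCast_of_tendsto_sub {g : ℕ → ℝ} {L : ℝ}
    (h : Tendsto (fun n => g (n + 1) - g n) atTop (𝓝 L)) :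
    Tendsto (fun n => g n / n) atTop (𝓝 L) := by
  have hmean : Tendsto (fun n : ℕ => (g n - g 0) / n) atTop (𝓝 L) :=
    h.cesaro.congr fun n => by rw [sum_range_sub, inv_mul_eq_div]
  have h := hmean.add (tendsto_const_div_atTop_nhds_zero_nat (g 0))
  rw [add_zero] at h
  exact h.congr fun n => by ring

theorem tendsto_log_div_natCast_of_tendsto_div {u : ℕ → ℝ} {r : ℝ} (hu : ∀ n, u n ≠ 0)
    (hr : r ≠ 0) (h : Tendsto (fun n => u (n + 1) / u n) atTop (𝓝 r)) :
    Tendsto (fun n => log (u n) / n) atTop (𝓝 (log r)) :=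
  tendsto_div_natCast_of_tendsto_sub <| (h.log hr).congr fun n => log_div (hu (n + 1)) (hu n)

theorem choose_add_succ_div_choose (M d b : ℕ) :
    ((M + d + (b + 1)).choose (d + 1) : ℝ) / (M + d).choose d =
      (M + d + 1).ascFactorial (b + 1) / ((d + 1) * (M + 1).ascFactorial b) := by
  have h₁ := Nat.choose_mul_factorial_mul_factorial (by omega : d + 1 ≤ M + d + (b + 1))
  have h₂ := Nat.choose_mul_factorial_mul_factorial (Nat.le_add_left d M)
  have h₃ := Nat.factorial_mul_ascFactorial (M + d) (b + 1)
  have h₄ := Nat.factorial_mul_ascFactorial M b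
  rw [show M + d + (b + 1) - (d + 1) = M + b by omega, Nat.factorial_succ] at h₁
  rw [Nat.add_sub_cancel] at h₂
  have hC : ((M + d).choose d : ℝ) ≠ 0 := by
    exact_mod_cast (Nat.choose_pos (Nat.le_add_left d M)).ne'
  have hfac : ((d.factorial * M.factorial : ℕ) : ℝ) ≠ 0 := by positivity
  rw [div_eq_div_iff hC (by positivity)]
  apply mul_right_cancel₀ hfac
  rify at h₁ h₂ h₃ h₄
  push_cast
  linear_combination
    (((M + d + (b + 1)).choose (d + 1) : ℝ) * (d + 1) * d.factorial) * h₄ + h₁ - h₃ -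
      ((M + d + 1).ascFactorial (b + 1) : ℝ) * h₂

theorem tendsto_ascFactorial_div_pow (α β k : ℕ) :
    Tendsto (fun n : ℕ => ((α * n + β).ascFactorial k : ℝ) / (n : ℝ) ^ k) atTop
      (𝓝 ((α : ℝ) ^ k)) := by
  have h : Tendsto (fun n : ℕ => ∏ i ∈ range k, (((α : ℝ) * n + (β + i)) / n)) atTop
      (𝓝 (∏ _i ∈ range k, (α : ℝ))) :=
    tendsto_finsetProd _ fun i _ => tendsto_affine_div_natCast _ _
  rw [prod_const, card_range] at h
  refine h.congr fun n => ?_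
  rw [prod_div_distrib, prod_const, card_range, Nat.ascFactorial_eq_prod_range]
  push_cast
  simp only [add_assoc]

theorem tendsto_choose_succ_div_choose (b c : ℕ) :
    Tendsto (fun d : ℕ => (((b + 1) * (d + 1) + c).choose (d + 1) : ℝ) /
      ((b + 1) * d + c).choose d) atTop (𝓝 (((b : ℝ) + 1) ^ (b + 1) / (b : ℝ) ^ b)) := by
  have hsucc : Tendsto (fun d : ℕ => ((d : ℝ) + 1) / d) atTop (𝓝 1) := by
    simpa using tendsto_affine_div_natCast 1 1
  have hbb : (b : ℝ) ^ b ≠ 0 := by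
    rcases b.eq_zero_or_pos with rfl | hb
    · simp
    · positivity
  have h := (tendsto_ascFactorial_div_pow (b + 1) (c + 1) (b + 1)).div
    (hsucc.mul (tendsto_ascFactorial_div_pow b (c + 1) b)) (by rwa [one_mul])
  push_cast at h
  rw [one_mul] at h
  refine h.congr' ?_
  filter_upwards [eventually_ne_atTop 0] with d hd
  have hdR : (d : ℝ) ≠ 0 := Nat.cast_ne_zero.mpr hd
  have key := choose_add_succ_div_choose (b * d + c) d b
  rw [show b * d + c + d + (b + 1) = (b + 1) * (d + 1) + c by ring,
    show b * d + c + d = (b + 1) * d + c by ring] at key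
  rw [key, show (b + 1) * d + c + 1 = (b + 1) * d + (c + 1) by ring,
    show b * d + c + 1 = b * d + (c + 1) by ring, Pi.div_apply]
  field_simp
  ring

theorem kroneckerEuler_pos {m : ℕ} (hm : 2 ≤ m) (d : ℕ) : 0 < kroneckerEuler m d := by
  have hm1 : (1 : ℝ) ≤ m - 1 := by
    have : (2 : ℝ) ≤ m := by exact_mod_cast hm
    linarith
  have hd : d ≤ (m - 1) ^ 2 * d + (m - 1) * m :=
    (Nat.le_mul_of_pos_left d (pow_pos (by omega) 2)).trans (Nat.le_add_right _ _)
  unfold kroneckerEuler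
  have : (0 : ℝ) < ((m : ℝ) - 1) * d + m := by nlinarith [(d.cast_nonneg : (0 : ℝ) ≤ d)]
  have : (0 : ℝ) < (Nat.choose ((m - 1) ^ 2 * d + (m - 1) * m) d : ℝ) := by
    exact_mod_cast Nat.choose_pos hd
  positivity

theorem tendsto_kroneckerEuler_succ_div {m b : ℕ} (hb : (m - 1) ^ 2 = b + 1) :
    Tendsto (fun d => kroneckerEuler m (d + 1) / kroneckerEuler m d) atTop
      (𝓝 (((b : ℝ) + 1) ^ (b + 1) / (b : ℝ) ^ b)) := by
  have hm : 2 ≤ m := by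
    by_contra! h
    interval_cases m <;> simp at hb
  have hm1 : (m : ℝ) - 1 ≠ 0 := by
    have : (2 : ℝ) ≤ m := by exact_mod_cast hm
    linarith
  have hpre := (tendsto_affine_div_affine 1 1 1 2 one_ne_zero).mul
    (tendsto_affine_div_affine ((m : ℝ) - 1) m ((m : ℝ) - 1) (2 * m - 1) hm1)
  rw [div_self one_ne_zero, div_self hm1, one_mul] at hpre
  have h := hpre.mul (tendsto_choose_succ_div_choose b ((m - 1) * m))
  rw [one_mul] at h
  refine h.congr fun d => ?_
  simp only [kroneckerEuler, hb]
  rw [mul_div_mul_comm]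
  congr 1
  have : (2 : ℝ) ≤ m := by exact_mod_cast hm
  have : (0 : ℝ) < ((m : ℝ) - 1) * d + m := by nlinarith [(d.cast_nonneg : (0 : ℝ) ≤ d)]
  have : (0 : ℝ) < ((m : ℝ) - 1) * d + (2 * m - 1) := by linarith
  field_simp
  push_cast
  ring

/-- For `m ≥ 3`, the sequence `(ln χ_d)/d` converges as `d → ∞`, with limit
`(m-1)²·ln((m-1)²) − (m²−2m)·ln(m²−2m)`. -/
theorem kronecker_euler_log_limit (m : ℕ) (hm : 3 ≤ m) :
    Tendsto (fun d : ℕ => Real.log (kroneckerEuler m d) / d) atTop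
      (nhds (((m : ℝ) - 1) ^ 2 * Real.log (((m : ℝ) - 1) ^ 2) -
        ((m : ℝ) ^ 2 - 2 * m) * Real.log ((m : ℝ) ^ 2 - 2 * m))) := by
  have hm1 : 0 < m - 1 := by omega
  obtain ⟨b, hb⟩ : ∃ b, (m - 1) ^ 2 = b + 1 := Nat.exists_eq_add_of_le' (pow_pos hm1 2)
  have hbR : (b : ℝ) + 1 = ((m : ℝ) - 1) ^ 2 := by
    rw [← Nat.cast_one (R := ℝ), ← Nat.cast_add, ← hb, Nat.cast_pow,
      Nat.cast_sub (by omega)]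
  have hbR' : (b : ℝ) = (m : ℝ) ^ 2 - 2 * m := by linear_combination hbR
  have hb0 : (b : ℝ) ≠ 0 := by
    have : (3 : ℝ) ≤ m := by exact_mod_cast hm
    rw [hbR']
    nlinarith
  have hlim := tendsto_log_div_natCast_of_tendsto_div
    (fun d => (kroneckerEuler_pos (by omega) d).ne') (by positivity)
    (tendsto_kroneckerEuler_succ_div hb)
  rw [log_div (by positivity) (pow_ne_zero _ hb0), log_pow, log_pow, Nat.cast_add_one, hbR,
    hbR'] at hlim
  exact hlim
end

section
/- Let m ≥ 2 be a natural number and let y be a formal power series over ℚ in the variable X with constant coefficient 0 satisfying the functional equation y = X·(1 + y^(m-1))^(m-1). Then for every n ≥ 1 and every natural number m' with 1 ≤ m' = m: if n ≥ m and (m-1) divides n−m, then n · (coefficient of X^n in y^m) = m · C(n·(m-1), (n−m)/(m-1)); otherwise the coefficient of X^n in y^m is 0. -/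
/-!
Write `y = X·u` with `u = P(y)` for the polynomial `P = (1 + Z^(m-1))^(m-1)`. Lagrange inversion
`[Xʳ] H(y)·y' = [Zʳ] H(Z)·P(Z)^(r+1)` rests on the residue computation
`[Xˢ] u^-(s+1)·(X·u)' = δ_{s,0}`: for `s > 0` the left side is `[Xˢ]` of `u^-s` plus `[Xˢ⁻¹]` of
`u'·u^-(s+1) = -(u^-s)'/s`, and these cancel. Since `n·[Xⁿ] y^m = m·[Xⁿ⁻¹] y^(m-1)·y'`, taking
`H = Z^(m-1)` reduces the theorem to reading off a coefficient of `Z^(m-1)·(1 + Z^(m-1))^(n(m-1))`.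
-/

open PowerSeries

theorem Polynomial.coeff_X_pow_mul_one_add_X_pow_pow {R : Type*} [CommSemiring R] {t : ℕ}
    (ht : 0 < t) (N k : ℕ) :
    (Polynomial.X ^ t * (1 + Polynomial.X ^ t) ^ N : Polynomial R).coeff k
      = if t ≤ k ∧ t ∣ k - t then (N.choose ((k - t) / t) : R) else 0 := by
  have hexpand : (1 + Polynomial.X ^ t : Polynomial R) ^ N
      = Polynomial.expand R t ((1 + Polynomial.X) ^ N) := by
    rw [map_pow, map_add, map_one, Polynomial.expand_X]
  rw [Polynomial.coeff_X_pow_mul', hexpand, Polynomial.coeff_expand ht,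
    Polynomial.coeff_one_add_X_pow]
  by_cases hk : t ≤ k <;> simp [hk]

theorem PowerSeries.constantCoeff_aeval {R : Type*} [CommRing R] {y : R⟦X⟧}
    (hy : constantCoeff y = 0) (P : Polynomial R) :
    constantCoeff (Polynomial.aeval y P) = P.coeff 0 := by
  rw [Polynomial.aeval_def, Polynomial.hom_eval₂, hy, algebraMap_eq, constantCoeff_comp_C,
    Polynomial.eval₂_at_zero]
  rfl

namespace PowerSeries

variable {K : Type*} [Field K] [CharZero K]

theorem coeff_inv_pow_mul_derivative_X_mul {u : K⟦X⟧} (hu : constantCoeff u ≠ 0) (s : ℕ) :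
    coeff s (u⁻¹ ^ (s + 1) * d⁄dX K (X * u)) = if s = 0 then 1 else 0 := by
  have hderiv : d⁄dX K (X * u) = u + X * d⁄dX K u := by
    rw [Derivation.leibniz, derivative_X, smul_eq_mul, smul_eq_mul]
    ring
  rcases s with _ | s
  · simp [coeff_zero_eq_constantCoeff, hderiv, hu]
  have hsplit : u⁻¹ ^ (s + 2) * (u + X * d⁄dX K u)
      = u⁻¹ ^ (s + 1) + X * (d⁄dX K u * u⁻¹ ^ (s + 2)) := by
    rw [pow_succ _ (s + 1), mul_add, mul_assoc, PowerSeries.inv_mul_cancel _ hu]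
    ring
  have hderiv_pow :
      d⁄dX K (u⁻¹ ^ (s + 1)) = -(C (s + 1 : K) * (d⁄dX K u * u⁻¹ ^ (s + 2))) := by
    rw [Derivation.leibniz_pow, derivative_inv', smul_eq_mul, nsmul_eq_mul]
    simp only [map_add, map_one, map_natCast, Nat.cast_add, Nat.cast_one, add_tsub_cancel_right]
    ring
  have hcoeff := coeff_derivative (u⁻¹ ^ (s + 1)) s
  rw [hderiv_pow, map_neg, coeff_C_mul] at hcoeff
  rw [hderiv, hsplit, map_add, coeff_succ_X_mul, if_neg s.succ_ne_zero]
  refine mul_right_cancel₀ (Nat.cast_add_one_ne_zero (R := K) s) ?_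
  linear_combination -hcoeff

theorem coeff_pow_mul_inv_pow_mul_derivative {u : K⟦X⟧} (hu : constantCoeff u ≠ 0) (j r : ℕ) :
    coeff r ((X * u) ^ j * u⁻¹ ^ (r + 1) * d⁄dX K (X * u)) = if j = r then 1 else 0 := by
  have hfactor : (X * u) ^ j * u⁻¹ ^ (r + 1) * d⁄dX K (X * u)
      = X ^ j * (u ^ j * u⁻¹ ^ (r + 1) * d⁄dX K (X * u)) := by
    ring
  rw [hfactor, coeff_X_pow_mul']
  by_cases hjr : j ≤ r
  · obtain ⟨s, rfl⟩ := Nat.exists_eq_add_of_le hjr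
    have hcancel : u ^ j * u⁻¹ ^ (j + s + 1) = u⁻¹ ^ (s + 1) := by
      rw [add_assoc, pow_add, ← mul_assoc, ← mul_pow, PowerSeries.mul_inv_cancel _ hu, one_pow,
        one_mul]
    rw [if_pos hjr, hcancel, Nat.add_sub_cancel_left, coeff_inv_pow_mul_derivative_X_mul hu]
    simp
  · rw [if_neg hjr, if_neg (by omega)]

theorem coeff_aeval_mul_inv_pow_mul_derivative {u : K⟦X⟧} (hu : constantCoeff u ≠ 0)
    (Q : Polynomial K) (r : ℕ) :
    coeff r (Polynomial.aeval (X * u) Q * u⁻¹ ^ (r + 1) * d⁄dX K (X * u)) = Q.coeff r := by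
  simp only [Polynomial.aeval_eq_sum_range, Finset.sum_mul, map_sum, smul_mul_assoc, coeff_smul,
    coeff_pow_mul_inv_pow_mul_derivative hu, smul_eq_mul, mul_ite, mul_one, mul_zero,
    Finset.sum_ite_eq', Finset.mem_range]
  split_ifs with hr
  · rfl
  · exact (Polynomial.coeff_eq_zero_of_natDegree_lt (by omega)).symm

theorem coeff_aeval_mul_derivative_of_eq_X_mul_aeval {y : K⟦X⟧} {P : Polynomial K}
    (hP : P.coeff 0 ≠ 0) (hy : y = X * Polynomial.aeval y P) (H : Polynomial K) (r : ℕ) :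
    coeff r (Polynomial.aeval y H * d⁄dX K y) = (H * P ^ (r + 1)).coeff r := by
  set u := Polynomial.aeval y P
  have hy0 : constantCoeff y = 0 := by rw [hy, map_mul, constantCoeff_X, zero_mul]
  have hu : constantCoeff u ≠ 0 := by rwa [constantCoeff_aeval hy0]
  have hexpand : Polynomial.aeval y H * d⁄dX K y
      = Polynomial.aeval y (H * P ^ (r + 1)) * u⁻¹ ^ (r + 1) * d⁄dX K y := by
    rw [map_mul, map_pow, mul_assoc (Polynomial.aeval y H), ← mul_pow,
      PowerSeries.mul_inv_cancel _ hu, one_pow, mul_one]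
  rw [hexpand, hy, coeff_aeval_mul_inv_pow_mul_derivative hu]

end PowerSeries

theorem coeff_pow_of_functional_equation_general (m : ℕ) (hm : 2 ≤ m)
    (y : PowerSeries ℚ)
    (hy : y = X * (1 + y ^ (m - 1)) ^ (m - 1)) :
    ∀ n : ℕ, 1 ≤ n →
      if m ≤ n ∧ (m - 1) ∣ (n - m) then
        (n : ℚ) * coeff n (y ^ m) = (m : ℚ) * Nat.choose (n * (m - 1)) ((n - m) / (m - 1))
      else coeff n (y ^ m) = 0 := by
  intro n hn
  obtain ⟨r, rfl⟩ : ∃ r, n = r + 1 := ⟨n - 1, by omega⟩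
  obtain ⟨t, rfl⟩ : ∃ t, m = t + 1 := ⟨m - 1, by omega⟩
  simp only [Nat.add_sub_cancel, Nat.add_sub_add_right, Nat.add_le_add_iff_right] at hy ⊢
  have ht : t ≠ 0 := by omega
  have hderiv : ((r + 1 : ℕ) : ℚ) * coeff (r + 1) (y ^ (t + 1))
      = (t + 1 : ℕ) * coeff r (y ^ t * d⁄dX ℚ y) := by
    rw [Nat.cast_succ, mul_comm, ← coeff_derivative, Derivation.leibniz_pow, Nat.add_sub_cancel,
      smul_eq_mul, map_nsmul, nsmul_eq_mul]
  have hlagrange := coeff_aeval_mul_derivative_of_eq_X_mul_aeval (y := y)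
    (P := (1 + Polynomial.X ^ t) ^ t) (by simp [Polynomial.coeff_zero_eq_eval_zero, ht])
    (by simpa using hy) (Polynomial.X ^ t) r
  rw [← pow_mul, Polynomial.coeff_X_pow_mul_one_add_X_pow_pow (by omega), map_pow,
    Polynomial.aeval_X] at hlagrange
  rw [hlagrange, mul_comm t] at hderiv
  split_ifs at hderiv ⊢
  · exact hderiv
  · exact (mul_eq_zero.mp (hderiv.trans (mul_zero _))).resolve_left (by positivity)

/-- Let `m ≥ 2` and let `y` be a formal power series over `ℚ` with constant
coefficient `0` satisfying `y = X·(1 + y^(m-1))^(m-1)`. Then for every `n ≥ 1`: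
if `n ≥ m` and `(m-1) ∣ n - m`, then
`n · [Xⁿ](y^m) = m · C(n·(m-1), (n−m)/(m-1))`, and otherwise `[Xⁿ](y^m) = 0`. -/
theorem coeff_pow_of_functional_equation (m : ℕ) (hm : 2 ≤ m)
    (y : PowerSeries ℚ) (hy0 : constantCoeff y = 0)
    (hy : y = X * (1 + y ^ (m - 1)) ^ (m - 1)) :
    ∀ n : ℕ, 1 ≤ n →
      if m ≤ n ∧ (m - 1) ∣ (n - m) then
        (n : ℚ) * coeff n (y ^ m) = (m : ℚ) * Nat.choose (n * (m - 1)) ((n - m) / (m - 1))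
      else coeff n (y ^ m) = 0 :=
  coeff_pow_of_functional_equation_general m hm y hy
end

section
/- (Lagrange inversion) Let K be a field of characteristic zero, let φ be a formal power series over K in the variable u with nonzero constant coefficient, and let y be a formal power series over K in x with constant coefficient 0 satisfying y = X·(φ substituted at y). Then: (1) for every formal power series g over K and every n ≥ 1, n · (coefficient of x^n in g substituted at y) = coefficient of u^(n−1) in g′·φ^n, where g′ is the formal derivative of g; (2) for all n ≥ m ≥ 1, n · (coefficient of x^n in y^m) = m · (coefficient of u^(n−m) in φ^n). -/
open PowerSeries Finset

variable {K : Type*} [Field K]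

/-- Composition `g(y)` of a formal power series `g` with a formal power series `y`
having constant coefficient `0`: the `n`-th coefficient of `g(y) = ∑ₖ gₖ yᵏ` is the
(finite, since `y` has positive order) sum `∑_{k ≤ n} gₖ · [Xⁿ](yᵏ)`. -/
noncomputable def PowerSeries.substInto (y g : PowerSeries K) : PowerSeries K :=
  PowerSeries.mk fun n => ∑ k ∈ Finset.range (n + 1), coeff k g * coeff n (y ^ k)

/-!
For `j ≥ 1` we have `y ^ j = X ^ j · φ(y) ^ j = X ^ j · (φ ^ j)(y)`, so `[X ^ (j + k)] y ^ j` is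
`[X ^ k] (φ ^ j)(y)`. Expanding `g(y) = ∑ᵢ gᵢ yⁱ` shows that part (2) at level `k`
(`k · [X ^ k] y ^ i = i · [u ^ (k - i)] φ ^ k` for all `i ≤ k`) implies part (1) at level `k`.
Applied to `g = φ ^ j`, together with `(j + k) · (φ ^ j)′ · φ ^ k = j · (φ ^ (j + k))′`, this yields
part (2) at level `j + k` from level `k`, so part (2) holds by strong induction on the level.
-/

theorem Derivation.add_nsmul_map_pow_mul_pow {R A : Type*} [CommSemiring R] [CommSemiring A]
    [Algebra R A] (D : Derivation R A A) (a : A) (s k : ℕ) :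
    (s + k) • (D (a ^ s) * a ^ k) = s • D (a ^ (s + k)) := by
  rcases s with _ | s
  · simp
  · rw [D.leibniz_pow, D.leibniz_pow, show s + 1 + k - 1 = s + k by omega, Nat.add_sub_cancel]
    simp only [smul_eq_mul, nsmul_eq_mul]
    ring

namespace PowerSeries

theorem coeff_derivative_mul {R : Type*} [CommSemiring R] (f g : R⟦X⟧) (n : ℕ) :
    coeff n (d⁄dX R f * g) = ∑ j ∈ range (n + 2), (j : R) * coeff j f * coeff (n + 1 - j) g := by
  rw [coeff_mul, Nat.sum_antidiagonal_eq_sum_range_succ_mk, sum_range_succ' _ (n + 1)]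
  simp only [Nat.cast_zero, zero_mul, add_zero]
  refine sum_congr rfl fun i hi => ?_
  rw [coeff_derivative, show n + 1 - (i + 1) = n - i by omega]
  push_cast
  ring

theorem coeff_pow_eq_zero_of_lt {R : Type*} [Semiring R] {y : R⟦X⟧} (hy0 : constantCoeff y = 0)
    {k n : ℕ} (h : n < k) : coeff n (y ^ k) = 0 :=
  coeff_of_lt_order n <| (Nat.cast_lt.mpr h).trans_le (le_order_pow_of_constantCoeff_eq_zero k hy0)

theorem coeff_substInto (y g : K⟦X⟧) (n : ℕ) :
    coeff n (substInto y g) = ∑ k ∈ range (n + 1), coeff k g * coeff n (y ^ k) :=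
  coeff_mk _ _

theorem substInto_eq_subst {y : K⟦X⟧} (hy0 : constantCoeff y = 0) (g : K⟦X⟧) :
    substInto y g = subst y g := by
  ext n
  rw [coeff_substInto, coeff_subst' (HasSubst.of_constantCoeff_zero' hy0),
    finsum_eq_finsetSum_of_support_subset (s := range (n + 1))]
  · simp only [smul_eq_mul]
  · intro k hk
    by_contra hkn
    exact hk (by simp [coeff_pow_eq_zero_of_lt hy0 (by simpa using hkn)])

theorem substInto_pow {y : K⟦X⟧} (hy0 : constantCoeff y = 0) (g : K⟦X⟧) (s : ℕ) :
    substInto y (g ^ s) = substInto y g ^ s := by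
  simp only [substInto_eq_subst hy0, subst_pow (HasSubst.of_constantCoeff_zero' hy0)]

theorem coeff_zero_substInto (y g : K⟦X⟧) : coeff 0 (substInto y g) = coeff 0 g := by
  simp [coeff_substInto]

theorem natCast_mul_coeff_substInto {y ψ : K⟦X⟧} {n : ℕ}
    (h : ∀ j ≤ n + 1, ((n + 1 : ℕ) : K) * coeff (n + 1) (y ^ j) = j * coeff (n + 1 - j) ψ)
    (g : K⟦X⟧) :
    ((n + 1 : ℕ) : K) * coeff (n + 1) (substInto y g) = coeff n (d⁄dX K g * ψ) := by
  rw [coeff_substInto, coeff_derivative_mul, mul_sum]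
  refine sum_congr rfl fun j hj => ?_
  rw [mul_left_comm, h j (by simpa [Nat.lt_succ_iff] using hj)]
  ring

section LagrangeInversion

variable {φ y : K⟦X⟧} (hy0 : constantCoeff y = 0) (hy : y = X * substInto y φ)
include hy0 hy

theorem coeff_add_pow_of_eq_X_mul_substInto (j k : ℕ) :
    coeff (j + k) (y ^ j) = coeff k (substInto y (φ ^ j)) := by
  conv_lhs => rw [hy, mul_pow, ← substInto_pow hy0, add_comm, coeff_X_pow_mul]

theorem natCast_mul_coeff_pow_of_eq_X_mul_substInto [CharZero K] (n : ℕ) :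
    ∀ j ≤ n, (n : K) * coeff n (y ^ j) = j * coeff (n - j) (φ ^ n) := by
  induction n using Nat.strong_induction_on with
  | _ n ih =>
  intro j hj
  rcases Nat.eq_zero_or_pos j with rfl | hj0
  · rcases n with _ | n <;> simp [coeff_one]
  obtain ⟨k, rfl⟩ := Nat.exists_eq_add_of_le hj
  rw [Nat.add_sub_cancel_left, coeff_add_pow_of_eq_X_mul_substInto hy0 hy]
  rcases k with _ | k
  · simp [coeff_zero_substInto]
  have hk : ((k + 1 : ℕ) : K) ≠ 0 := Nat.cast_ne_zero.mpr k.succ_ne_zero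
  refine mul_left_cancel₀ hk ?_
  calc ((k + 1 : ℕ) : K) * (((j + (k + 1) : ℕ) : K) * coeff (k + 1) (substInto y (φ ^ j)))
      = ((j + (k + 1) : ℕ) : K) * coeff k (d⁄dX K (φ ^ j) * φ ^ (k + 1)) := by
        rw [← natCast_mul_coeff_substInto (ih (k + 1) (by omega))]
        ring
    _ = coeff k (j • d⁄dX K (φ ^ (j + (k + 1)))) := by
        rw [← Derivation.add_nsmul_map_pow_mul_pow, map_nsmul, nsmul_eq_mul]
    _ = ((k + 1 : ℕ) : K) * (j * coeff (k + 1) (φ ^ (j + (k + 1)))) := by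
        rw [map_nsmul, coeff_derivative, nsmul_eq_mul]
        push_cast
        ring

end LagrangeInversion

end PowerSeries

theorem lagrange_inversion_general [CharZero K]
    (φ : PowerSeries K)
    (y : PowerSeries K) (hy0 : constantCoeff y = 0)
    (hy : y = X * PowerSeries.substInto y φ) :
    (∀ g : PowerSeries K, ∀ n : ℕ, 1 ≤ n →
      (n : K) * coeff n (PowerSeries.substInto y g) =
        coeff (n - 1) (d⁄dX K g * φ ^ n)) ∧
    (∀ m n : ℕ, 1 ≤ m → m ≤ n →
      (n : K) * coeff n (y ^ m) = (m : K) * coeff (n - m) (φ ^ n)) := by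
  have key := natCast_mul_coeff_pow_of_eq_X_mul_substInto hy0 hy
  refine ⟨fun g n hn => ?_, fun m n _ hmn => key n m hmn⟩
  obtain ⟨n, rfl⟩ := Nat.exists_eq_add_of_le' hn
  exact natCast_mul_coeff_substInto (key (n + 1)) g

/-- **Lagrange inversion.** Let `K` be a field of characteristic zero, `φ` a formal
power series with nonzero constant coefficient, and `y` a power series with
constant coefficient `0` satisfying `y = X·φ(y)`. Then:
(1) for every power series `g` and every `n ≥ 1`,
    `n · [Xⁿ] g(y) = [u^(n−1)] (g′·φⁿ)`;
(2) for all `n ≥ m ≥ 1`, `n · [Xⁿ](y^m) = m · [u^(n−m)] φⁿ`. -/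
theorem lagrange_inversion [CharZero K]
    (φ : PowerSeries K) (hφ : constantCoeff φ ≠ 0)
    (y : PowerSeries K) (hy0 : constantCoeff y = 0)
    (hy : y = X * PowerSeries.substInto y φ) :
    (∀ g : PowerSeries K, ∀ n : ℕ, 1 ≤ n →
      (n : K) * coeff n (PowerSeries.substInto y g) =
        coeff (n - 1) (d⁄dX K g * φ ^ n)) ∧
    (∀ m n : ℕ, 1 ≤ m → m ≤ n →
      (n : K) * coeff n (y ^ m) = (m : K) * coeff (n - m) (φ ^ n)) :=
  lagrange_inversion_general φ y hy0 hy
end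

section
/- Let K be a field of characteristic zero, a ∈ K, and b ≥ 1 a natural number. Let y be a formal power series over K in X with constant coefficient 0 satisfying y = X·(1 + a·y^b). Then for every n ≥ 1: if b divides n−1, then n · (coefficient of X^n in y) = C(n, (n−1)/b) · a^((n−1)/b); otherwise the coefficient of X^n in y is 0. -/
/-!
Lagrange inversion for a polynomial `φ`. Write `y = X u` with `u = φ(y)`. Then
`y' = φ(y)ⁿ⁺¹ u⁻⁽ⁿ⁺¹⁾ y' = ∑ₖ [tᵏ]φⁿ⁺¹ · Xᵏ u⁻⁽ⁿ⁺¹⁻ᵏ⁾ (X u)'`, and the `Xⁿ`-coefficient of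
`Xᵏ u⁻⁽ⁿ⁺¹⁻ᵏ⁾ (X u)'` is `δₖₙ`: for `j ≥ 1`, `j u⁻⁽ʲ⁺¹⁾ (X u)' = j u⁻ʲ - X (u⁻ʲ)'`, and `X f'` has
`Xʲ`-coefficient `j [Xʲ] f`. Hence `(n + 1) [Xⁿ⁺¹] y = [tⁿ] φⁿ⁺¹`, which for `φ = 1 + a tᵇ` is
read off the binomial theorem.
-/

open PowerSeries
open scoped Polynomial

theorem coeff_X_mul_derivative {R : Type*} [CommSemiring R] (f : R⟦X⟧) (n : ℕ) :
    coeff n (X * d⁄dX R f) = n * coeff n f := by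
  cases n with
  | zero => simp
  | succ n => rw [coeff_succ_X_mul, coeff_derivative]; push_cast; ring

theorem coeff_inv_pow_succ_mul_derivative_X_mul {K : Type*} [Field K] [CharZero K]
    (u : K⟦X⟧) (hu : constantCoeff u ≠ 0) (j : ℕ) :
    coeff j (u⁻¹ ^ (j + 1) * d⁄dX K (X * u)) = if j = 0 then 1 else 0 := by
  have hvu : u⁻¹ * u = 1 := PowerSeries.inv_mul_cancel u hu
  have hD : d⁄dX K (X * u) = u + X * d⁄dX K u := by
    rw [Derivation.leibniz, derivative_X, smul_eq_mul, smul_eq_mul]; ring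
  cases j with
  | zero => simp [hD, hu]
  | succ k =>
    have hderiv : ((k + 1 : ℕ) : K⟦X⟧) * (u⁻¹ ^ (k + 2) * d⁄dX K (X * u))
        = ((k + 1 : ℕ) : K⟦X⟧) * u⁻¹ ^ (k + 1) - X * d⁄dX K (u⁻¹ ^ (k + 1)) := by
      rw [hD, Derivation.leibniz_pow, derivative_inv', Nat.add_sub_cancel, nsmul_eq_mul,
        smul_eq_mul]
      linear_combination ((k + 1 : ℕ) * u⁻¹ ^ (k + 1) : K⟦X⟧) * hvu
    have hcoeff := congrArg (coeff (k + 1)) hderiv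
    rw [← map_natCast (C (R := K)), coeff_C_mul, map_sub, coeff_C_mul, coeff_X_mul_derivative,
      sub_self] at hcoeff
    rw [if_neg k.succ_ne_zero]
    exact (mul_eq_zero.mp hcoeff).resolve_left (Nat.cast_ne_zero.mpr k.succ_ne_zero)

theorem constantCoeff_aeval_of_constantCoeff_eq_zero {R : Type*} [CommSemiring R] {y : R⟦X⟧}
    (p : R[X]) (hy : constantCoeff y = 0) :
    constantCoeff (Polynomial.aeval y p) = p.coeff 0 := by
  rw [Polynomial.aeval_def, Polynomial.hom_eval₂, hy]
  simp [Polynomial.coeff_zero_eq_eval_zero]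

section Lagrange

variable {K : Type*} [Field K] [CharZero K] {u y : K⟦X⟧}

theorem coeff_pow_mul_inv_pow_mul_derivative (hu : constantCoeff u ≠ 0) (hy : y = X * u)
    (k n : ℕ) : coeff n (y ^ k * u⁻¹ ^ (n + 1) * d⁄dX K y) = if k = n then 1 else 0 := by
  rw [hy, mul_pow, mul_assoc, mul_assoc, coeff_X_pow_mul']
  by_cases hle : k ≤ n
  · obtain ⟨j, rfl⟩ := Nat.exists_eq_add_of_le hle
    have hcancel : u ^ k * (u⁻¹ ^ (k + j + 1) * d⁄dX K (X * u))
        = u⁻¹ ^ (j + 1) * d⁄dX K (X * u) := by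
      rw [add_assoc, pow_add, ← mul_assoc, ← mul_assoc, ← mul_pow,
        PowerSeries.mul_inv_cancel u hu, one_pow, one_mul]
    rw [if_pos hle, hcancel, Nat.add_sub_cancel_left,
      coeff_inv_pow_succ_mul_derivative_X_mul u hu]
    simp
  · rw [if_neg hle, if_neg (by omega)]

theorem coeff_aeval_mul_inv_pow_mul_derivative (hu : constantCoeff u ≠ 0) (hy : y = X * u)
    (p : K[X]) (n : ℕ) :
    coeff n (Polynomial.aeval y p * u⁻¹ ^ (n + 1) * d⁄dX K y) = p.coeff n := by
  induction p using Polynomial.induction_on' with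
  | add p q hp hq => rw [map_add, add_mul, add_mul, map_add, hp, hq, Polynomial.coeff_add]
  | monomial k c =>
    rw [Polynomial.aeval_monomial, Polynomial.coeff_monomial, Algebra.algebraMap_eq_smul_one,
      smul_mul_assoc, one_mul, smul_mul_assoc, smul_mul_assoc, coeff_smul,
      coeff_pow_mul_inv_pow_mul_derivative hu hy]
    simp

theorem lagrange_inversion_s4 (φ : K[X]) (hφ : φ.coeff 0 ≠ 0) (hy : y = X * Polynomial.aeval y φ)
    (n : ℕ) : ((n + 1 : ℕ) : K) * coeff (n + 1) y = (φ ^ (n + 1)).coeff n := by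
  set u := Polynomial.aeval y φ
  have hu : constantCoeff u ≠ 0 := by
    rwa [constantCoeff_aeval_of_constantCoeff_eq_zero φ (by rw [hy]; simp)]
  have hexpand : d⁄dX K y = Polynomial.aeval y (φ ^ (n + 1)) * u⁻¹ ^ (n + 1) * d⁄dX K y := by
    rw [map_pow, ← mul_pow, PowerSeries.mul_inv_cancel u hu, one_pow, one_mul]
  rw [← coeff_aeval_mul_inv_pow_mul_derivative hu hy, ← hexpand, coeff_derivative, mul_comm,
    Nat.cast_succ]

end Lagrange

theorem Polynomial.coeff_one_add_C_mul_X_pow {R : Type*} [CommSemiring R] (a : R) (n k : ℕ) :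
    ((1 + C a * X) ^ n).coeff k = n.choose k * a ^ k := by
  rw [add_comm, add_pow, finsetSum_coeff]
  simp only [one_pow, mul_one, mul_pow, ← C_pow, ← C_eq_natCast, mul_right_comm _ _ (C _),
    ← C_mul, coeff_C_mul_X_pow]
  rw [Finset.sum_ite_eq]
  split_ifs with h
  · ring
  · rw [Nat.choose_eq_zero_of_lt (by simpa using h)]; simp

theorem Polynomial.coeff_one_add_C_mul_X_pow_pow {R : Type*} [CommSemiring R] (a : R) {b : ℕ}
    (hb : 0 < b) (n m : ℕ) :
    ((1 + C a * X ^ b) ^ n).coeff m =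
      if b ∣ m then (n.choose (m / b) * a ^ (m / b) : R) else 0 := by
  have hexpand : 1 + C a * X ^ b = expand R b (1 + C a * X) := by simp
  rw [hexpand, ← map_pow, coeff_expand hb, coeff_one_add_C_mul_X_pow]

theorem coeff_of_functional_equation_general {K : Type*} [Field K] [CharZero K]
    (a : K) (b : ℕ) (hb : 1 ≤ b)
    (y : PowerSeries K)
    (hy : y = X * (1 + C a * y ^ b)) :
    ∀ n : ℕ, 1 ≤ n →
      if b ∣ (n - 1) then
        (n : K) * coeff n y = (Nat.choose n ((n - 1) / b) : K) * a ^ ((n - 1) / b)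
      else coeff n y = 0 := by
  intro n hn
  obtain ⟨m, rfl⟩ := Nat.exists_eq_add_of_le' hn
  have hy' : y = X * Polynomial.aeval y (1 + Polynomial.C a * Polynomial.X ^ b) := by
    simpa using hy
  have hφ : (1 + Polynomial.C a * Polynomial.X ^ b).coeff 0 ≠ 0 := by
    rw [Polynomial.coeff_add, Polynomial.coeff_C_mul_X_pow, if_neg (by omega)]
    simp
  have hcoeff := lagrange_inversion_s4 _ hφ hy' m
  rw [Polynomial.coeff_one_add_C_mul_X_pow_pow a hb] at hcoeff
  rw [Nat.add_sub_cancel]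
  split_ifs with hdvd
  · rwa [if_pos hdvd] at hcoeff
  · rw [if_neg hdvd] at hcoeff
    exact (mul_eq_zero.mp hcoeff).resolve_left (Nat.cast_ne_zero.mpr m.succ_ne_zero)

/-- Let `K` be a field of characteristic zero, `a ∈ K`, `b ≥ 1`, and let `y` be a
formal power series over `K` with constant coefficient `0` satisfying
`y = X·(1 + a·y^b)`. Then for every `n ≥ 1`: if `b ∣ n−1` then
`n · [Xⁿ] y = C(n, (n−1)/b) · a^((n−1)/b)`, and otherwise `[Xⁿ] y = 0`. -/
theorem coeff_of_functional_equation {K : Type*} [Field K] [CharZero K]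
    (a : K) (b : ℕ) (hb : 1 ≤ b)
    (y : PowerSeries K) (hy0 : constantCoeff y = 0)
    (hy : y = X * (1 + C a * y ^ b)) :
    ∀ n : ℕ, 1 ≤ n →
      if b ∣ (n - 1) then
        (n : K) * coeff n y = (Nat.choose n ((n - 1) / b) : K) * a ^ ((n - 1) / b)
      else coeff n y = 0 :=
  coeff_of_functional_equation_general a b hb y hy
end

section
/- Let a > 0 be a real number and b ≥ 2 a natural number. Suppose x₀, y₀ are positive real numbers satisfying the system y₀ = x₀·(1 + a·y₀^b) and 1 = x₀·a·b·y₀^(b−1). Then x₀⁻¹ = a·b·(1/((b−1)·a))^((b−1)/b), where the outer exponent is a real-number power (rpow). -/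
/-!
Multiplying the second equation by `y₀` gives `y₀ = x₀ a b y₀^b`; comparing with the first
equation yields `(b - 1) a y₀^b = 1`. Hence `y₀^b = 1/((b-1)a)`, so the real power in the claim
is `(y₀^b)^((b-1)/b) = y₀^(b-1)`, and the second equation reads `x₀⁻¹ = a b y₀^(b-1)`.
-/

theorem Real.pow_rpow_natCast_div {y : ℝ} (hy : 0 ≤ y) {n : ℕ} (hn : n ≠ 0) (m : ℕ) :
    (y ^ n) ^ ((m : ℝ) / n) = y ^ m := by
  rw [← Real.rpow_natCast y n, ← Real.rpow_mul hy, mul_div_cancel₀ _ (Nat.cast_ne_zero.2 hn),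
    Real.rpow_natCast]

theorem sub_one_mul_mul_pow_eq_one {a x y : ℝ} {b : ℕ}
    (h1 : y = x * (1 + a * y ^ b)) (h2 : 1 = x * a * b * y ^ (b - 1)) :
    ((b : ℝ) - 1) * a * y ^ b = 1 := by
  have hx : x ≠ 0 := by rintro rfl; simp at h2
  have hb : b ≠ 0 := by rintro rfl; simp at h2
  have hy : y = x * a * b * y ^ b := by
    linear_combination y * h2 + x * a * b * pow_sub_one_mul hb y
  refine mul_left_cancel₀ hx ?_
  linear_combination h1 - hy

theorem singularity_of_functional_equation_general (a : ℝ) (b : ℕ)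
    (x₀ y₀ : ℝ) (hy₀ : 0 < y₀)
    (h1 : y₀ = x₀ * (1 + a * y₀ ^ b))
    (h2 : 1 = x₀ * a * b * y₀ ^ (b - 1)) :
    x₀⁻¹ = a * b * (1 / (((b : ℝ) - 1) * a)) ^ (((b : ℝ) - 1) / b) := by
  have hb : b ≠ 0 := by rintro rfl; simp at h2
  have hy₀b : 1 / (((b : ℝ) - 1) * a) = y₀ ^ b := by
    rw [one_div]
    exact inv_eq_of_mul_eq_one_right (sub_one_mul_mul_pow_eq_one h1 h2)
  rw [hy₀b, ← Nat.cast_pred (Nat.pos_of_ne_zero hb), Real.pow_rpow_natCast_div hy₀.le hb]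
  exact inv_eq_of_mul_eq_one_right (by linear_combination -h2)

/-- Let `a > 0` be real and `b ≥ 2` a natural number. If `x₀, y₀ > 0` satisfy the
system `y₀ = x₀·(1 + a·y₀^b)` and `1 = x₀·a·b·y₀^(b−1)`, then
`x₀⁻¹ = a·b·(1/((b−1)·a))^((b−1)/b)` (the outer exponent being a real power). -/
theorem singularity_of_functional_equation (a : ℝ) (ha : 0 < a) (b : ℕ) (hb : 2 ≤ b)
    (x₀ y₀ : ℝ) (hx₀ : 0 < x₀) (hy₀ : 0 < y₀)
    (h1 : y₀ = x₀ * (1 + a * y₀ ^ b))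
    (h2 : 1 = x₀ * a * b * y₀ ^ (b - 1)) :
    x₀⁻¹ = a * b * (1 / (((b : ℝ) - 1) * a)) ^ (((b : ℝ) - 1) / b) :=
  singularity_of_functional_equation_general a b x₀ y₀ hy₀ h1 h2
end

section
/- Let m ≥ 3 be a natural number and suppose x₀, y₀ are positive real numbers satisfying the system y₀ = x₀·(1 + y₀^(m−1))^(m−1) and 1 = x₀·(m−1)²·(1 + y₀^(m−1))^(m−2)·y₀^(m−2). Then y₀^(m−1) = 1/((m−1)² − 1), and x₀⁻¹ = (m−1)^(2(m−1)) · (m²−2m)^(−(m²−2m)/(m−1)), where the last exponent is a real-number power (rpow) with exponent −(m²−2m)/(m−1) ∈ ℝ. -/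
/-!
Write `A = 1 + y₀^(m−1)`. Multiplying the second equation by `y₀` and comparing with the first
gives `A = (m−1)² y₀^(m−1)`, which pins down `y₀^(m−1)`, hence `A = (m−1)²/((m−1)² − 1)`.
The first equation then gives `x₀⁻¹ = A^(m−1) / y₀`, and taking the `(m−1)`-th root of
`y₀^(m−1)` turns `1 / y₀` into a real power of `(m−1)² − 1`.
-/

open Real

theorem inv_eq_rpow_inv_of_pow_eq_one_div {y d : ℝ} {k : ℕ} (hy : 0 < y) (hk : k ≠ 0)
    (h : y ^ k = 1 / d) : y⁻¹ = d ^ ((k : ℝ)⁻¹) := by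
  have hd : 0 < d := one_div_pos.mp (h ▸ pow_pos hy k)
  rw [← pow_rpow_inv_natCast hy.le hk, h, one_div, inv_rpow hd.le, inv_inv]

section KroneckerSystem

variable {x y c : ℝ} {n : ℕ}

theorem sq_mul_pow_eq_one_add_pow (h1 : y = x * (1 + y ^ (n + 1)) ^ (n + 1))
    (h2 : 1 = x * c ^ 2 * (1 + y ^ (n + 1)) ^ n * y ^ n) :
    c ^ 2 * y ^ (n + 1) = 1 + y ^ (n + 1) := by
  set A := 1 + y ^ (n + 1)
  have hxA : x * A ^ n * (c ^ 2 * y ^ n) = 1 := by rw [h2]; ring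
  apply mul_left_cancel₀ (left_ne_zero_of_mul_eq_one hxA)
  calc x * A ^ n * (c ^ 2 * y ^ (n + 1)) = x * A ^ n * (c ^ 2 * y ^ n) * y := by ring
    _ = x * A ^ (n + 1) := by rw [hxA, one_mul, ← h1]
    _ = x * A ^ n * A := by ring

theorem pow_eq_one_div_sq_sub_one (h1 : y = x * (1 + y ^ (n + 1)) ^ (n + 1))
    (h2 : 1 = x * c ^ 2 * (1 + y ^ (n + 1)) ^ n * y ^ n) :
    y ^ (n + 1) = 1 / (c ^ 2 - 1) :=
  eq_one_div_of_mul_eq_one_left <| by linear_combination sq_mul_pow_eq_one_add_pow h1 h2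

theorem inv_eq_pow_mul_rpow (hy : 0 < y) (h1 : y = x * (1 + y ^ (n + 1)) ^ (n + 1))
    (h2 : 1 = x * c ^ 2 * (1 + y ^ (n + 1)) ^ n * y ^ n) :
    x⁻¹ = c ^ (2 * (n + 1)) * (c ^ 2 - 1) ^ (-((n : ℝ) + 1) + ((n : ℝ) + 1)⁻¹) := by
  have hY := pow_eq_one_div_sq_sub_one h1 h2
  have hd : 0 < c ^ 2 - 1 := one_div_pos.mp (hY ▸ pow_pos hy _)
  have hA : 1 + y ^ (n + 1) = c ^ 2 / (c ^ 2 - 1) := by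
    rw [hY]; field_simp; ring
  have hy_inv : y⁻¹ = (c ^ 2 - 1) ^ ((n : ℝ) + 1)⁻¹ := by
    exact_mod_cast inv_eq_rpow_inv_of_pow_eq_one_div hy n.succ_ne_zero hY
  have hx_inv : x⁻¹ = (1 + y ^ (n + 1)) ^ (n + 1) * y⁻¹ := by
    have hx : x ≠ 0 := by rintro rfl; simp only [zero_mul] at h1; exact hy.ne' h1
    rw [eq_mul_inv_iff_mul_eq₀ hy.ne']
    conv_lhs => rw [h1]
    exact inv_mul_cancel_left₀ hx _
  rw [hx_inv, hy_inv, hA, div_pow, ← pow_mul, rpow_add hd, rpow_neg hd.le, div_eq_mul_inv,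
    mul_assoc]
  norm_cast

end KroneckerSystem

theorem singularity_kronecker_general (m : ℕ) (hm : 3 ≤ m)
    (x₀ y₀ : ℝ) (hy₀ : 0 < y₀)
    (h1 : y₀ = x₀ * (1 + y₀ ^ (m - 1)) ^ (m - 1))
    (h2 : 1 = x₀ * ((m : ℝ) - 1) ^ 2 * (1 + y₀ ^ (m - 1)) ^ (m - 2) * y₀ ^ (m - 2)) :
    y₀ ^ (m - 1) = 1 / (((m : ℝ) - 1) ^ 2 - 1) ∧
    x₀⁻¹ = ((m : ℝ) - 1) ^ (2 * (m - 1)) *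
      ((m : ℝ) ^ 2 - 2 * m) ^ (-(((m : ℝ) ^ 2 - 2 * m) / ((m : ℝ) - 1))) := by
  obtain ⟨n, rfl⟩ : ∃ n, m = n + 2 := ⟨m - 2, by omega⟩
  have hc : ((n + 2 : ℕ) : ℝ) - 1 = n + 1 := by push_cast; ring
  have hd : ((n + 2 : ℕ) : ℝ) ^ 2 - 2 * (n + 2 : ℕ) = ((n : ℝ) + 1) ^ 2 - 1 := by push_cast; ring
  simp only [Nat.add_sub_cancel, Nat.add_succ_sub_one, hc, hd] at h1 h2 ⊢
  refine ⟨pow_eq_one_div_sq_sub_one h1 h2, ?_⟩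
  rw [inv_eq_pow_mul_rpow hy₀ h1 h2]
  -- `-(c² - 1) / c = -c + c⁻¹` for `c = m - 1`
  congr 2
  field_simp
  ring

/-- Let `m ≥ 3` and suppose `x₀, y₀ > 0` are real numbers satisfying
`y₀ = x₀·(1 + y₀^(m−1))^(m−1)` and `1 = x₀·(m−1)²·(1 + y₀^(m−1))^(m−2)·y₀^(m−2)`.
Then `y₀^(m−1) = 1/((m−1)² − 1)` and
`x₀⁻¹ = (m−1)^(2(m−1)) · (m²−2m)^(−(m²−2m)/(m−1))`, the last exponent being a
real power. -/
theorem singularity_kronecker (m : ℕ) (hm : 3 ≤ m)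
    (x₀ y₀ : ℝ) (hx₀ : 0 < x₀) (hy₀ : 0 < y₀)
    (h1 : y₀ = x₀ * (1 + y₀ ^ (m - 1)) ^ (m - 1))
    (h2 : 1 = x₀ * ((m : ℝ) - 1) ^ 2 * (1 + y₀ ^ (m - 1)) ^ (m - 2) * y₀ ^ (m - 2)) :
    y₀ ^ (m - 1) = 1 / (((m : ℝ) - 1) ^ 2 - 1) ∧
    x₀⁻¹ = ((m : ℝ) - 1) ^ (2 * (m - 1)) *
      ((m : ℝ) ^ 2 - 2 * m) ^ (-(((m : ℝ) ^ 2 - 2 * m) / ((m : ℝ) - 1))) :=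
  singularity_kronecker_general m hm x₀ y₀ hy₀ h1 h2
end

section
/- Let n, t be natural numbers and n₁, …, n_t natural numbers with n_i ≤ n for all i. Then there exist subspaces W₁, …, W_t of ℂⁿ with dim W_i = n_i such that for every nonempty subset S ⊆ {1, …, t}, the dimension of the intersection ⋂_{i ∈ S} W_i equals max(0, Σ_{i ∈ S} n_i − (|S| − 1)·n). -/
/-!
Evaluating a coefficient vector `x ∈ Kⁿ` at a point `a` is the linear functional
`x ↦ ∑ₖ xₖ aᵏ`, a row of a Vandermonde matrix. Evaluations at distinct points are as independent
as they can be: any `m` of them cut out a subspace of codimension `min m n`, since a square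
Vandermonde matrix on distinct points is invertible. Let `Wᵢ` be the common kernel of `n - nᵢ`
evaluations, at points chosen pairwise distinct across all `i`. Then `⋂_{i ∈ S} Wᵢ` is the common
kernel of `∑_{i ∈ S} (n - nᵢ)` evaluations, so its dimension is `n - ∑_{i ∈ S} (n - nᵢ)`,
truncated at `0`.
-/

open Module Matrix Finset

namespace Matrix

variable {K ι : Type*} [Field K]

theorem rank_rectVandermonde_one [Fintype ι] {v : ι → K} (hv : Function.Injective v) (n : ℕ) :
    (rectVandermonde v 1 n).rank = min (Fintype.card ι) n := by
  refine le_antisymm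
    (le_min (rank_le_card_height _) ((rank_le_card_width _).trans_eq (Fintype.card_fin n))) ?_
  set m := min (Fintype.card ι) n
  let r : Fin m ↪ ι :=
    (Fin.castLEEmb (min_le_left _ _)).trans (Fintype.equivFin ι).symm.toEmbedding
  have hsub : (rectVandermonde v 1 n).submatrix r (Fin.castLE (min_le_right _ _)) =
      vandermonde (v ∘ r) := by
    ext i j
    simp [rectVandermonde_apply]
  calc m = (vandermonde (v ∘ r)).rank :=
        ((rank_of_det_ne_zero (det_vandermonde_ne_zero_iff.mpr (hv.comp r.injective))).trans
          (Fintype.card_fin m)).symm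
    _ ≤ (rectVandermonde v 1 n).rank := hsub ▸ rank_submatrix_le _ _ _

theorem finrank_iInf_ker_proj_mulVecLin {n : ℕ} (A : Matrix ι (Fin n) K) (s : Finset ι) :
    finrank K ↥(⨅ i ∈ s, LinearMap.ker (LinearMap.proj i ∘ₗ A.mulVecLin)) =
      n - (A.submatrix ((↑) : s → ι) id).rank := by
  have hker : (⨅ i ∈ s, LinearMap.ker (LinearMap.proj i ∘ₗ A.mulVecLin)) =
      LinearMap.ker (A.submatrix ((↑) : s → ι) id).mulVecLin := by
    ext x
    simp [Submodule.mem_iInf, funext_iff, mulVec, dotProduct]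
  have := (A.submatrix ((↑) : s → ι) id).mulVecLin.finrank_range_add_finrank_ker
  rw [finrank_fin_fun] at this
  rw [hker, rank]
  omega

theorem finrank_iInf_ker_proj_rectVandermonde {v : ι → K} (hv : Function.Injective v) (n : ℕ)
    (s : Finset ι) :
    finrank K ↥(⨅ i ∈ s, LinearMap.ker (LinearMap.proj i ∘ₗ (rectVandermonde v 1 n).mulVecLin)) =
      n - #s := by
  have hrank : ((rectVandermonde v 1 n).submatrix ((↑) : s → ι) id).rank = min #s n := by
    rw [← Fintype.card_coe s]
    exact rank_rectVandermonde_one (hv.comp Subtype.val_injective) n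
  rw [finrank_iInf_ker_proj_mulVecLin, hrank]
  omega

end Matrix

theorem exists_submodules_finrank_iInf_eq_sub (K : Type*) [Field K] [Infinite K] {ι : Type*}
    [Countable ι] (n : ℕ) (d : ι → ℕ) :
    ∃ W : ι → Submodule K (Fin n → K),
      ∀ S : Finset ι, finrank K ↥(⨅ i ∈ S, W i) = n - ∑ i ∈ S, d i := by
  classical
  obtain ⟨e⟩ := nonempty_embedding_nat (ι × ℕ)
  let v : ι × ℕ → K := Infinite.natEmbedding K ∘ e
  have hv : Function.Injective v := (Infinite.natEmbedding K).injective.comp e.injective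
  let nodes : ι → Finset (ι × ℕ) := fun i => {i} ×ˢ range (d i)
  have hdisj : (Set.univ : Set ι).PairwiseDisjoint nodes := fun i _ j _ hij =>
    disjoint_product.mpr (Or.inl (disjoint_singleton.mpr hij))
  refine ⟨fun i => ⨅ p ∈ nodes i,
    LinearMap.ker (LinearMap.proj p ∘ₗ (rectVandermonde v 1 n).mulVecLin), fun S => ?_⟩
  rw [← iInf_biUnion, finrank_iInf_ker_proj_rectVandermonde hv,
    card_biUnion (hdisj.subset (Set.subset_univ _))]
  simp [nodes]

/-- **Generic position of subspaces.** Given `n₁, …, n_t ≤ n`, there exist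
subspaces `W₁, …, W_t` of `ℂⁿ` with `dim Wᵢ = nᵢ` such that for every nonempty
subset `S ⊆ {1, …, t}` the dimension of `⋂_{i ∈ S} Wᵢ` equals
`max(0, Σ_{i ∈ S} nᵢ − (|S| − 1)·n)`. -/
theorem generic_position_subspaces (n t : ℕ) (ns : Fin t → ℕ)
    (hns : ∀ i, ns i ≤ n) :
    ∃ W : Fin t → Submodule ℂ (Fin n → ℂ),
      (∀ i, finrank ℂ (W i) = ns i) ∧
      ∀ S : Finset (Fin t), S.Nonempty →
        (finrank ℂ ↥(⨅ i ∈ S, W i : Submodule ℂ (Fin n → ℂ)) : ℤ) =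
          max 0 ((∑ i ∈ S, (ns i : ℤ)) - ((S.card : ℤ) - 1) * n) := by
  obtain ⟨W, hW⟩ := exists_submodules_finrank_iInf_eq_sub ℂ n (fun i => n - ns i)
  refine ⟨W, fun i => ?_, fun S _ => ?_⟩
  · have := hW {i}
    rwa [Finset.iInf_singleton, sum_singleton, Nat.sub_sub_self (hns i)] at this
  · have hcodim : ((∑ i ∈ S, (n - ns i) : ℕ) : ℤ) = S.card * n - ∑ i ∈ S, (ns i : ℤ) := by
      rw [Nat.cast_sum, sum_congr rfl fun i _ => Nat.cast_sub (hns i), sum_sub_distrib]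
      simp
    rw [hW S, sub_one_mul]
    omega
end
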